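/- Let m ≥ 1 and 0 ≤ r ≤ m be integers, and let w be an integer with 0 ≤ w ≤ 2^m. Then the number A_{m,r}(w) of codewords of RM(m,r) of Hamming weight exactly w satisfies A_{m,r}(w) ≤ 2^{C(m,≤r)·h_b(w/2^m)}. -/

import Mathlib

/-- The `m`-bit binary representation (MSB first) of the coordinate index `s`,
as an evaluation point in `F₂^m` (lexicographic coordinate ordering). -/
def bitRepr (m : ℕ) (s : ℕ) : Fin m → ZMod 2 :=
  fun j => if Nat.testBit s (m - 1 - (j : ℕ)) then 1 else 0

/-- Evaluation of an `m`-variate polynomial over `F₂` at all points of `F₂^m`,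
listed in lexicographic order, as a linear map. -/
noncomputable def evalRM (m : ℕ) :
    MvPolynomial (Fin m) (ZMod 2) →ₗ[ZMod 2] (Fin (2 ^ m) → ZMod 2) :=
  LinearMap.pi fun s => (MvPolynomial.aeval (bitRepr m (s : ℕ))).toLinearMap

/-- The Reed-Muller code RM(m,r): evaluation vectors of polynomials of total degree ≤ r. -/
noncomputable def RM (m r : ℕ) : Submodule (ZMod 2) (Fin (2 ^ m) → ZMod 2) :=
  (MvPolynomial.restrictTotalDegree (Fin m) (ZMod 2) r).map (evalRM m)

/-- A word `w` satisfies the `(d,∞)`-RLL constraint: any two 1s are separated by at least d 0s. -/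
def RLL (d : ℕ) {n : ℕ} (w : Fin n → ZMod 2) : Prop :=
  ∀ i j : Fin n, w i = 1 → (i : ℕ) < (j : ℕ) → (j : ℕ) ≤ (i : ℕ) + d → w j = 0

/-- The binary entropy function (base-2 logarithm), with h_b(0) = h_b(1) = 0. -/
noncomputable def hb (p : ℝ) : ℝ := -(p * Real.logb 2 p) - (1 - p) * Real.logb 2 (1 - p)

/-!
Let `V` be the set of weight-`w` codewords. Translations of `F₂^m` preserve `RM(m,r)` and the
Hamming weight and act transitively on coordinates, so each coordinate is nonzero on exactly the
fraction `p = w / 2^m` of `V`. A polynomial of degree `≤ r` that vanishes at all points of weight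
`≤ r` vanishes everywhere (Möbius inversion over `F₂`), so the words of `V` are determined by
their restrictions to that set `S` of `C(m,≤r)` coordinates. Under the product Bernoulli(`p`)
distribution `Q` on `F₂^S` we have `∑_{c ∈ V} Q c ≤ 1`, while the uniform marginals make the
geometric mean of `Q` over `V` equal to `2^{-|S| h_b(p)}`; AM-GM gives `|V| ≤ 2^{|S| h_b(p)}`.
-/

open MvPolynomial Finset

lemma Finset.sum_powerset_eq_zero_of_insert_eq {α R : Type*} [DecidableEq α] [Ring R] [CharP R 2]
    {T : Finset α} {j : α} (hj : j ∈ T) (g : Finset α → R)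
    (hg : ∀ W ⊆ T.erase j, g (insert j W) = g W) :
    ∑ W ∈ T.powerset, g W = 0 := by
  rw [← insert_erase hj, sum_powerset_insert (notMem_erase j T),
    sum_congr rfl fun W hW => hg W (mem_powerset.1 hW), CharTwo.add_self_eq_zero]

lemma Finsupp.card_support_le_sum {σ : Type*} (α : σ →₀ ℕ) :
    #α.support ≤ α.sum fun _ e => e := by
  simpa [Finsupp.sum] using card_nsmul_le_sum α.support α 1 fun _ hi =>
    Nat.one_le_iff_ne_zero.2 (Finsupp.mem_support_iff.1 hi)

namespace MvPolynomial

variable {σ R : Type*} [DecidableEq σ] [CommRing R]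

def charVec (U : Finset σ) : σ → R := fun i => if i ∈ U then 1 else 0

lemma eval_charVec_monomial [Nontrivial R] (U : Finset σ) (α : σ →₀ ℕ) (c : R) :
    eval (charVec U) (monomial α c) = if α.support ⊆ U then c else 0 := by
  rw [eval_monomial, Finsupp.prod]
  split_ifs with h
  · rw [prod_eq_one fun i hi => by simp [charVec, h hi], mul_one]
  · obtain ⟨i, hi, hiU⟩ := not_subset.1 h
    rw [prod_eq_zero hi (by simp [charVec, hiU, Finsupp.mem_support_iff.1 hi]), mul_zero]

variable [CharP R 2]

/-- Each monomial of `f` misses some variable `j ∈ T`, so its terms cancel in pairs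
`W, insert j W`. -/
lemma sum_powerset_eval_charVec_eq_zero (f : MvPolynomial σ R) {T : Finset σ}
    (hT : f.totalDegree < #T) : ∑ W ∈ T.powerset, eval (charVec W) f = 0 := by
  have : Nontrivial R := CharP.nontrivial_of_char_ne_one (by norm_num : 2 ≠ 1)
  conv_lhs => enter [2, W]; rw [f.as_sum, map_sum]
  rw [sum_comm]
  refine sum_eq_zero fun α hα => ?_
  obtain ⟨j, hjT, hjα⟩ := exists_mem_notMem_of_card_lt_card
    ((α.card_support_le_sum.trans (le_totalDegree hα)).trans_lt hT)
  refine sum_powerset_eq_zero_of_insert_eq hjT _ fun W _ => ?_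
  simp only [eval_charVec_monomial, subset_insert_iff_of_notMem hjα]

lemma eval_charVec_eq_zero_of_forall_card_le {f : MvPolynomial σ R} {r : ℕ}
    (hf : f.totalDegree ≤ r) (h : ∀ U : Finset σ, #U ≤ r → eval (charVec U) f = 0)
    (U : Finset σ) : eval (charVec U) f = 0 := by
  induction U using Finset.strongInduction with
  | H U ih =>
    rcases le_or_gt #U r with hU | hU
    · exact h U hU
    · have hsum := sum_powerset_eval_charVec_eq_zero f (hf.trans_lt hU)
      rwa [← add_sum_erase _ _ (mem_powerset_self U),
        sum_eq_zero fun W hW => ih W (Finset.ssubset_iff_subset_ne.2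
          ⟨mem_powerset.1 (mem_of_mem_erase hW), ne_of_mem_erase hW⟩), add_zero] at hsum

end MvPolynomial

lemma MvPolynomial.totalDegree_aeval_le {σ τ R : Type*} [CommSemiring R]
    (g : σ → MvPolynomial τ R) {d : ℕ} (hg : ∀ i, (g i).totalDegree ≤ d)
    (f : MvPolynomial σ R) : (aeval g f).totalDegree ≤ d * f.totalDegree := by
  conv_lhs => rw [f.as_sum, map_sum]
  refine totalDegree_finsetSum_le fun α hα => ?_
  rw [aeval_monomial, ← Algebra.smul_def, Finsupp.prod]
  calc _ ≤ (∏ i ∈ α.support, g i ^ α i).totalDegree := totalDegree_smul_le _ _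
    _ ≤ ∑ i ∈ α.support, α i * d := (totalDegree_finsetProd _ _).trans
          (sum_le_sum fun i _ => (totalDegree_pow _ _).trans (Nat.mul_le_mul_left _ (hg i)))
    _ = d * α.sum fun _ e => e := by rw [Finsupp.sum, mul_sum]; simp only [mul_comm]
    _ ≤ d * f.totalDegree := Nat.mul_le_mul_left _ (le_totalDegree hα)

lemma MvPolynomial.charVec_filter_ne_zero {σ : Type*} [Fintype σ] [DecidableEq σ]
    (x : σ → ZMod 2) : charVec {i | x i ≠ 0} = x := by
  funext i
  have : ∀ a : ZMod 2, a ≠ 0 → a = 1 := by decide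
  by_cases h : x i = 0
  · simp [charVec, h]
  · simp [charVec, this _ h]

section Words

variable {ι α : Type*}

lemma hammingNorm_comp_perm [Fintype ι] [Zero α] [DecidableEq α] (c : ι → α)
    (σ : Equiv.Perm ι) : hammingNorm (c ∘ σ) = hammingNorm c :=
  card_bijective σ σ.bijective fun i => by simp

lemma card_filter_apply_perm_eq (V : Finset (ι → α)) (σ : Equiv.Perm ι)
    (hV : ∀ c ∈ V, c ∘ σ ∈ V) (P : α → Prop) [DecidablePred P] (i : ι) :
    #{c ∈ V | P (c (σ i))} = #{c ∈ V | P (c i)} := by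
  classical
  have hinj : Function.Injective fun c : ι → α => c ∘ σ := σ.surjective.injective_comp_right
  have hVσ : V.image (· ∘ σ) = V := eq_of_subset_of_card_le (image_subset_iff.2 hV)
    (card_image_of_injective _ hinj).ge
  conv_rhs => rw [← hVσ, filter_image, card_image_of_injective _ hinj]
  rfl

lemma sum_card_filter_apply_ne_zero [Fintype ι] [Zero α] [DecidableEq α]
    (V : Finset (ι → α)) : ∑ i, #{c ∈ V | c i ≠ 0} = ∑ c ∈ V, hammingNorm c := by
  simp only [card_filter, hammingNorm]
  exact sum_comm

end Words

section ReedMuller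

variable {m r : ℕ}

lemma bitRepr_injective (m : ℕ) : Function.Injective fun s : Fin (2 ^ m) => bitRepr m s := by
  intro s s' h
  refine Fin.ext (Nat.eq_of_testBit_eq fun i => ?_)
  by_cases hi : i < m
  · have hj : m - 1 - (m - 1 - i) = i := by omega
    have := congrFun h ⟨m - 1 - i, by omega⟩
    simp only [bitRepr, hj] at this
    by_cases hb1 : Nat.testBit s i <;> by_cases hb2 : Nat.testBit s' i <;>
      simp [hb1, hb2] at this ⊢
  · have hm : 2 ^ m ≤ 2 ^ i := Nat.pow_le_pow_right (by norm_num) (by omega)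
    rw [Nat.testBit_lt_two_pow (s.isLt.trans_le hm), Nat.testBit_lt_two_pow (s'.isLt.trans_le hm)]

noncomputable def pointEquiv (m : ℕ) : Fin (2 ^ m) ≃ (Fin m → ZMod 2) :=
  Equiv.ofBijective _ ((Fintype.bijective_iff_injective_and_card _).2
    ⟨bitRepr_injective m, by simp [ZMod.card]⟩)

lemma mem_RM_iff {c : Fin (2 ^ m) → ZMod 2} :
    c ∈ RM m r ↔ ∃ f : MvPolynomial (Fin m) (ZMod 2),
      f.totalDegree ≤ r ∧ ∀ s, c s = eval (pointEquiv m s) f := by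
  simp only [RM, Submodule.mem_map, mem_restrictTotalDegree, funext_iff, eq_comm (a := c _)]
  rfl

noncomputable def translatePerm (m : ℕ) (t : Fin m → ZMod 2) : Equiv.Perm (Fin (2 ^ m)) :=
  (pointEquiv m).symm.permCongr (Equiv.addRight t)

lemma pointEquiv_translatePerm (t : Fin m → ZMod 2) (s : Fin (2 ^ m)) :
    pointEquiv m (translatePerm m t s) = pointEquiv m s + t := by
  simp [translatePerm, Equiv.permCongr_apply]

lemma comp_translatePerm_mem_RM {c : Fin (2 ^ m) → ZMod 2} (t : Fin m → ZMod 2)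
    (hc : c ∈ RM m r) : c ∘ translatePerm m t ∈ RM m r := by
  obtain ⟨f, hf, hc⟩ := mem_RM_iff.1 hc
  have hdeg : ∀ i, (X i + C (t i) : MvPolynomial (Fin m) (ZMod 2)).totalDegree ≤ 1 := fun i =>
    (totalDegree_add _ _).trans (by simp)
  refine mem_RM_iff.2 ⟨aeval (fun i => X i + C (t i)) f,
    (totalDegree_aeval_le _ hdeg f).trans (by rwa [one_mul]), fun s => ?_⟩
  simp only [Function.comp_apply, hc, pointEquiv_translatePerm, ← aeval_eq_eval,
    aeval_eq_bind₁, aeval_bind₁, map_add, aeval_X, algHom_C, Algebra.algebraMap_self,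
    RingHom.id_apply]
  rfl

noncomputable def RMInfoSet (m r : ℕ) : Finset (Fin (2 ^ m)) :=
  (univ.filter fun U : Finset (Fin m) => #U ≤ r).image fun U => (pointEquiv m).symm (charVec U)

lemma card_RMInfoSet_le : #(RMInfoSet m r) ≤ ∑ i ∈ range (r + 1), m.choose i := by
  refine card_image_le.trans ?_
  calc #{U : Finset (Fin m) | #U ≤ r}
      ≤ #((range (r + 1)).biUnion fun i => powersetCard i (univ : Finset (Fin m))) :=
        card_le_card fun U hU => mem_biUnion.2 ⟨#U,
          mem_range.2 (Nat.lt_succ_of_le (mem_filter.1 hU).2), mem_powersetCard_univ.2 rfl⟩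
    _ ≤ ∑ i ∈ range (r + 1), #(powersetCard i (univ : Finset (Fin m))) := card_biUnion_le
    _ = ∑ i ∈ range (r + 1), m.choose i := by simp only [card_powersetCard, card_univ,
        Fintype.card_fin]

lemma eq_zero_of_mem_RM_of_forall_mem_RMInfoSet {c : Fin (2 ^ m) → ZMod 2} (hc : c ∈ RM m r)
    (h : ∀ s ∈ RMInfoSet m r, c s = 0) : c = 0 := by
  obtain ⟨f, hf, hc⟩ := mem_RM_iff.1 hc
  have hvan : ∀ U : Finset (Fin m), #U ≤ r → eval (charVec U) f = 0 := fun U hU => by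
    simpa [hc] using h _ (mem_image_of_mem _ (mem_filter.2 ⟨mem_univ U, hU⟩))
  funext s
  rw [hc, ← MvPolynomial.charVec_filter_ne_zero (pointEquiv m s)]
  exact eval_charVec_eq_zero_of_forall_card_le hf hvan _

lemma eq_of_mem_RM_of_eqOn_RMInfoSet {c c' : Fin (2 ^ m) → ZMod 2} (hc : c ∈ RM m r)
    (hc' : c' ∈ RM m r) (h : ∀ s ∈ RMInfoSet m r, c s = c' s) : c = c' :=
  sub_eq_zero.1 (eq_zero_of_mem_RM_of_forall_mem_RMInfoSet (sub_mem hc hc') fun s hs => by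
    simp [h s hs])

lemma card_filter_apply_ne_zero_eq_of_translate_invariant {w : ℕ}
    (V : Finset (Fin (2 ^ m) → ZMod 2)) (hV : ∀ t, ∀ c ∈ V, c ∘ translatePerm m t ∈ V)
    (hw : ∀ c ∈ V, hammingNorm c = w)
    (s : Fin (2 ^ m)) : (#{c ∈ V | c s ≠ 0} : ℝ) = w / 2 ^ m * #V := by
  have hconst : ∀ s', #{c ∈ V | c s' ≠ 0} = #{c ∈ V | c s ≠ 0} := fun s' => by
    have hs : translatePerm m (pointEquiv m s' - pointEquiv m s) s = s' :=
      (pointEquiv m).injective (by rw [pointEquiv_translatePerm]; abel)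
    rw [← hs]
    exact card_filter_apply_perm_eq V _ (hV _) (· ≠ 0) s
  have hcount := sum_card_filter_apply_ne_zero V
  rw [sum_congr rfl fun s' _ => hconst s', sum_congr rfl hw, sum_const, sum_const, card_univ,
    Fintype.card_fin, smul_eq_mul, smul_eq_mul] at hcount
  rw [div_mul_eq_mul_div, eq_div_iff (by positivity)]
  exact_mod_cast (mul_comm _ _).trans (hcount.trans (mul_comm _ _))

end ReedMuller

section Entropy

open Real

lemma rpow_self_eq_two_rpow {p : ℝ} (hp : 0 ≤ p) : p ^ p = 2 ^ (p * logb 2 p) := by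
  rcases hp.eq_or_lt with rfl | hp
  · simp
  · rw [mul_comm, rpow_mul zero_le_two, rpow_logb zero_lt_two (by norm_num) hp]

lemma two_rpow_neg_hb {p : ℝ} (hp0 : 0 ≤ p) (hp1 : p ≤ 1) :
    (2 : ℝ) ^ (-hb p) = p ^ p * (1 - p) ^ (1 - p) := by
  rw [rpow_self_eq_two_rpow hp0, rpow_self_eq_two_rpow (sub_nonneg.2 hp1), ← rpow_add zero_lt_two,
    hb]
  ring_nf

lemma hb_nonneg {p : ℝ} (hp0 : 0 ≤ p) (hp1 : p ≤ 1) : 0 ≤ hb p := by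
  have h1 : p * logb 2 p ≤ 0 :=
    mul_nonpos_of_nonneg_of_nonpos hp0 (logb_nonpos one_lt_two hp0 hp1)
  have h2 : (1 - p) * logb 2 (1 - p) ≤ 0 := mul_nonpos_of_nonneg_of_nonpos (by linarith)
    (logb_nonpos one_lt_two (by linarith) (by linarith))
  rw [hb]
  linarith

lemma pow_mul_one_sub_pow_of_cast_eq_mul {p : ℝ} (hp0 : 0 ≤ p) (hp1 : p ≤ 1) {M N : ℕ}
    (hMN : M ≤ N) (hM : (M : ℝ) = p * N) :
    p ^ M * (1 - p) ^ (N - M) = ((2 : ℝ) ^ (-hb p)) ^ N := by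
  have hNM : ((N - M : ℕ) : ℝ) = (1 - p) * N := by rw [Nat.cast_sub hMN, hM]; ring
  rw [two_rpow_neg_hb hp0 hp1, mul_pow, ← rpow_natCast, hM, rpow_mul hp0, ← rpow_natCast,
    hNM, rpow_mul (sub_nonneg.2 hp1), rpow_natCast, rpow_natCast]

theorem card_le_two_rpow_mul_hb [Fintype ι] (V : Finset (ι → ZMod 2)) {p : ℝ} (hp0 : 0 ≤ p)
    (hp1 : p ≤ 1) (hV : ∀ i, (#{c ∈ V | c i ≠ 0} : ℝ) = p * #V) :
    (#V : ℝ) ≤ 2 ^ (Fintype.card ι * hb p) := by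
  classical
  rcases V.eq_empty_or_nonempty with rfl | hne
  · simpa using rpow_nonneg zero_le_two _
  set N := #V
  set G : ℝ := (2 : ℝ) ^ (-hb p) with hG
  -- `Q c` is the probability of the word `c` under the product Bernoulli(p) distribution.
  set q : ZMod 2 → ℝ := fun x => if x ≠ 0 then p else 1 - p
  set Q : (ι → ZMod 2) → ℝ := fun c => ∏ i, q (c i)
  have hQ : ∀ c, 0 ≤ Q c := fun c => prod_nonneg fun i _ => by
    simp only [q]; split_ifs <;> linarith
  have hsum : ∑ c ∈ V, Q c ≤ 1 := by
    refine (sum_le_univ_sum_of_nonneg hQ).trans_eq ?_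
    rw [← Fintype.prod_sum]
    refine prod_eq_one fun i _ => ?_
    rw [show (univ : Finset (ZMod 2)) = {0, 1} by decide, sum_pair zero_ne_one]
    simp [q]
  have hcoord : ∀ i, ∏ c ∈ V, q (c i) = G ^ N := fun i => by
    have hsplit := card_filter_add_card_filter_not (s := V) fun c => c i ≠ 0
    rw [← prod_filter_mul_prod_filter_not V fun c => c i ≠ 0,
      prod_congr rfl fun c hc => if_pos (mem_filter.1 hc).2,
      prod_congr rfl fun c hc => if_neg (mem_filter.1 hc).2, prod_const, prod_const,
      show #{c ∈ V | ¬c i ≠ 0} = N - #{c ∈ V | c i ≠ 0} by omega]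
    exact pow_mul_one_sub_pow_of_cast_eq_mul hp0 hp1 (card_filter_le _ _) (hV i)
  have hprod : ∏ c ∈ V, Q c = (G ^ Fintype.card ι) ^ N := by
    rw [prod_comm, prod_congr rfl fun i _ => hcoord i, prod_const, card_univ, ← pow_mul,
      ← pow_mul, mul_comm]
  have hN : N ≠ 0 := (card_pos.2 hne).ne'
  have hamgm := geom_mean_le_arith_mean_weighted V (fun _ => (N : ℝ)⁻¹) Q
    (fun _ _ => by positivity)
    (by rw [sum_const, nsmul_eq_mul, mul_inv_cancel₀ (Nat.cast_ne_zero.2 hN)]) fun c _ => hQ c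
  rw [finsetProd_rpow _ _ fun c _ => hQ c, hprod,
    pow_rpow_inv_natCast (pow_nonneg (by positivity) _) hN, ← mul_sum] at hamgm
  have hGN : (N : ℝ) * G ^ Fintype.card ι ≤ 1 := by
    have := mul_le_mul_of_nonneg_left (hamgm.trans (mul_le_of_le_one_right (by positivity) hsum))
      (Nat.cast_nonneg N)
    rwa [mul_inv_cancel₀ (Nat.cast_ne_zero.2 hN)] at this
  rwa [hG, ← rpow_natCast, ← rpow_mul zero_le_two, ← le_div_iff₀ (by positivity), one_div,
    ← rpow_neg zero_le_two, neg_mul, neg_neg, mul_comm] at hGN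

theorem card_le_two_rpow_card_mul_hb_of_injOn (V : Finset (ι → ZMod 2)) (S : Finset ι)
    (hinj : Set.InjOn (fun (c : ι → ZMod 2) (i : S) => c i) V) {p : ℝ} (hp0 : 0 ≤ p)
    (hp1 : p ≤ 1) (hV : ∀ i ∈ S, (#{c ∈ V | c i ≠ 0} : ℝ) = p * #V) :
    (#V : ℝ) ≤ 2 ^ (#S * hb p) := by
  classical
  have := card_le_two_rpow_mul_hb (V.image fun c (i : S) => c i) hp0 hp1 fun i => by
    rw [filter_image, card_image_of_injOn (hinj.mono (coe_subset.2 (filter_subset _ _))),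
      card_image_of_injOn hinj]
    exact hV i i.2
  rwa [card_image_of_injOn hinj, Fintype.card_coe] at this

end Entropy

theorem stmt15_general (m r w : ℕ) (hw : w ≤ 2 ^ m) :
    ({c : Fin (2 ^ m) → ZMod 2 | c ∈ RM m r ∧ hammingNorm c = w}.ncard : ℝ) ≤
      (2 : ℝ) ^ ((∑ i ∈ Finset.range (r + 1), (m.choose i : ℝ)) * hb ((w : ℝ) / 2 ^ m)) := by
  classical
  set V : Finset (Fin (2 ^ m) → ZMod 2) := {c | c ∈ RM m r ∧ hammingNorm c = w}
  have hV : {c : Fin (2 ^ m) → ZMod 2 | c ∈ RM m r ∧ hammingNorm c = w}.ncard = #V := by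
    rw [← Set.ncard_coe_finset]
    simp [V]
  have hp0 : (0 : ℝ) ≤ w / 2 ^ m := by positivity
  have hp1 : (w : ℝ) / 2 ^ m ≤ 1 := div_le_one_of_le₀ (by exact_mod_cast hw) (by positivity)
  have hinj : Set.InjOn (fun (c : Fin (2 ^ m) → ZMod 2) (s : RMInfoSet m r) => c s) V :=
    fun c hc c' hc' h => eq_of_mem_RM_of_eqOn_RMInfoSet (mem_filter.1 hc).2.1
      (mem_filter.1 hc').2.1 fun s hs => congrFun h ⟨s, hs⟩
  have hmarg := card_filter_apply_ne_zero_eq_of_translate_invariant V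
    (fun t c hc => mem_filter.2 ⟨mem_univ _, comp_translatePerm_mem_RM t (mem_filter.1 hc).2.1,
      (hammingNorm_comp_perm c _).trans (mem_filter.1 hc).2.2⟩)
    fun c hc => (mem_filter.1 hc).2.2
  rw [hV]
  calc (#V : ℝ) ≤ 2 ^ (#(RMInfoSet m r) * hb (w / 2 ^ m)) :=
        card_le_two_rpow_card_mul_hb_of_injOn V _ hinj hp0 hp1 fun s _ => hmarg s
    _ ≤ _ := Real.rpow_le_rpow_of_exponent_le one_le_two (mul_le_mul_of_nonneg_right
        (by exact_mod_cast card_RMInfoSet_le) (hb_nonneg hp0 hp1))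

/-- The number A_{m,r}(w) of codewords of RM(m,r) of Hamming weight exactly w
satisfies A_{m,r}(w) ≤ 2^{C(m,≤r)·h_b(w/2^m)}. -/
theorem stmt15 (m r w : ℕ) (hm : 1 ≤ m) (hr : r ≤ m) (hw : w ≤ 2 ^ m) :
    ({c : Fin (2 ^ m) → ZMod 2 | c ∈ RM m r ∧ hammingNorm c = w}.ncard : ℝ) ≤
      (2 : ℝ) ^ ((∑ i ∈ Finset.range (r + 1), (m.choose i : ℝ)) * hb ((w : ℝ) / 2 ^ m)) :=
  stmt15_general m r w hw
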